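/- Let α ∈ ℝ, γ a positive semidefinite complex q×q matrix, and μ a finite positive semidefinite q×q matrix measure on [α,∞). Define F(z) = γ + ∫_{[α,∞)} (1+t-α)/(t-z) dμ(t). Then for every z, w ∈ ℂ \ [α,∞) one has F(z)* = F(z̄), and the null space of F(z) equals the intersection of the null space of γ with the null space of μ([α,∞)); in particular the null space and column space of F(z) do not depend on z. -/

import Mathlib

/-! If `F(z) u = 0`, then `0 = u* F(z) u = u* γ u + ∫ (1 + t - α) / (t - z) · u* d(t) u dτ` with
`u* γ u ≥ 0` and `u* d(t) u ≥ 0`. Multiplying by `c = 1` when `z < α` is real, and by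
`c = -i Im z` otherwise, makes the real part of the kernel strictly positive on `[α, ∞)` while
keeping `Re (c u* γ u) ≥ 0`; hence `d(t) u = 0` for τ-a.e. `t`, so both integrals annihilate `u`,
and then so does `γ`. The symmetry `F(z)* = F(z̄)` turns the constancy of the kernels into the
constancy of the ranges, because `ran F(z) = (ker F(z)*)ᗮ`. -/

open Matrix Complex MeasureTheory Filter
open scoped ComplexOrder

/-- The "imaginary part" of a complex square matrix: `Im M = (M - M*)/(2i)`. -/
noncomputable def mIm {q : ℕ} (M : Matrix (Fin q) (Fin q) ℂ) : Matrix (Fin q) (Fin q) ℂ :=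
  ((2 : ℂ) * Complex.I)⁻¹ • (M - Mᴴ)

/-- The "real part" of a complex square matrix: `Re M = (M + M*)/2`. -/
noncomputable def mRe {q : ℕ} (M : Matrix (Fin q) (Fin q) ℂ) : Matrix (Fin q) (Fin q) ℂ :=
  ((2 : ℂ))⁻¹ • (M + Mᴴ)

section Positivity

variable {X : Type*} [MeasurableSpace X] {μ : Measure X}

theorem ae_eq_zero_of_add_integral_mul_eq_zero {a c : ℂ} {φ g : X → ℂ} (ha : 0 ≤ a)
    (hg : ∀ x, 0 ≤ g x) (hc : 0 ≤ c.re) (hcφ : ∀ᵐ x ∂μ, 0 < (c * φ x).re)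
    (hint : Integrable (fun x => φ x * g x) μ) (h : a + ∫ x, φ x * g x ∂μ = 0) :
    ∀ᵐ x ∂μ, g x = 0 := by
  have hg_re : ∀ x, g x = (g x).re := fun x =>
    eq_re_of_ofReal_le (r := 0) (by rw [ofReal_zero]; exact hg x)
  set ψ : X → ℝ := fun x => (c * φ x).re * (g x).re
  have hψ : ∀ x, (c * (φ x * g x)).re = ψ x := fun x => by
    rw [← mul_assoc, hg_re x, re_mul_ofReal]
  have hψ_int : Integrable ψ μ := by
    simpa only [RCLike.re_to_complex, hψ] using (hint.const_mul c).re
  have hψ_nonneg : 0 ≤ᵐ[μ] ψ := by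
    filter_upwards [hcφ] with x hx
    exact mul_nonneg hx.le (nonneg_iff.1 (hg x)).1
  have hca : 0 ≤ (c * a).re := by
    rw [mul_re, ← (nonneg_iff.1 ha).2, mul_zero, sub_zero]
    exact mul_nonneg hc (nonneg_iff.1 ha).1
  have hsum : (c * a).re + ∫ x, ψ x ∂μ = 0 := by
    have := congrArg (fun w => (c * w).re) h
    simp only [mul_add, add_re, mul_zero, zero_re] at this
    have hre : (∫ x, c * (φ x * g x) ∂μ).re = ∫ x, ψ x ∂μ := by
      rw [← integral_congr_ae (Eventually.of_forall hψ)]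
      exact (integral_re (hint.const_mul c)).symm
    rwa [← integral_const_mul, hre] at this
  have hψ_zero : ψ =ᵐ[μ] 0 := (integral_eq_zero_iff_of_nonneg_ae hψ_nonneg hψ_int).1 <|
    le_antisymm (by linarith) (integral_nonneg_of_ae hψ_nonneg)
  filter_upwards [hψ_zero, hcφ] with x hx hcx
  rw [hg_re x, (mul_eq_zero.1 hx).resolve_left hcx.ne', ofReal_zero]

end Positivity

namespace Matrix

section Integral

variable {X m n 𝕜 : Type*} [MeasurableSpace X] {μ : Measure X} [RCLike 𝕜] {D : X → Matrix m n 𝕜}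

theorem integrable_dotProduct_mulVec [Fintype m] [Fintype n]
    (hD : ∀ i j, Integrable (fun x => D x i j) μ) (v : m → 𝕜) (u : n → 𝕜) :
    Integrable (fun x => v ⬝ᵥ (D x *ᵥ u)) μ := by
  simp only [dotProduct, mulVec, Finset.mul_sum]
  exact integrable_finsetSum _ fun i _ => integrable_finsetSum _ fun j _ =>
    ((hD i j).mul_const _).const_mul _

theorem dotProduct_integral_mulVec [Fintype m] [Fintype n]
    (hD : ∀ i j, Integrable (fun x => D x i j) μ) (v : m → 𝕜) (u : n → 𝕜) :
    v ⬝ᵥ ((of fun i j => ∫ x, D x i j ∂μ) *ᵥ u) = ∫ x, v ⬝ᵥ (D x *ᵥ u) ∂μ := by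
  simp only [dotProduct, mulVec, of_apply, Finset.mul_sum]
  rw [integral_finsetSum _ fun i _ => integrable_finsetSum _ fun j _ =>
    ((hD i j).mul_const _).const_mul _]
  refine Finset.sum_congr rfl fun i _ => ?_
  rw [integral_finsetSum _ fun j _ => ((hD i j).mul_const _).const_mul _]
  simp only [integral_const_mul, integral_mul_const]

theorem integral_mulVec_eq_zero [Fintype m] [DecidableEq m] [Fintype n]
    (hD : ∀ i j, Integrable (fun x => D x i j) μ)
    {u : n → 𝕜} (hu : ∀ᵐ x ∂μ, D x *ᵥ u = 0) :
    (of fun i j => ∫ x, D x i j ∂μ) *ᵥ u = 0 := by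
  ext i
  have := dotProduct_integral_mulVec hD (Pi.single i 1) u
  simp only [single_dotProduct, one_mul] at this
  rw [this, Pi.zero_apply]
  exact integral_eq_zero_of_ae (hu.mono fun x hx => by simp [hx])

end Integral

section Range

variable {m n R 𝕜 : Type*} [Fintype n] [DecidableEq n]

theorem ker_toLpLin [CommRing R] (p q : ENNReal) (P : Matrix m n R) :
    LinearMap.ker (toLpLin p q P) =
      (LinearMap.ker P.mulVecLin).comap (WithLp.linearEquiv p R (n → R)).toLinearMap := by
  ext v
  simp [toLpLin_apply]

theorem map_range_toLpLin [CommRing R] (p q : ENNReal) (P : Matrix m n R) :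
    (LinearMap.range (toLpLin p q P)).map (WithLp.linearEquiv q R (m → R)).toLinearMap =
      LinearMap.range P.mulVecLin := by
  ext v
  simp only [Submodule.mem_map, LinearMap.mem_range, mulVecLin_apply]
  simp only [toLpLin_apply, LinearEquiv.coe_coe, WithLp.linearEquiv_apply, exists_exists_eq_and]
  exact ⟨fun ⟨y, hy⟩ => ⟨_, hy⟩, fun ⟨y, hy⟩ => ⟨WithLp.toLp p y, hy⟩⟩

theorem range_mulVecLin_eq_of_ker_conjTranspose_eq [Fintype m] [DecidableEq m] [RCLike 𝕜]
    {M N : Matrix m n 𝕜} (h : LinearMap.ker Mᴴ.mulVecLin = LinearMap.ker Nᴴ.mulVecLin) :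
    LinearMap.range M.mulVecLin = LinearMap.range N.mulVecLin := by
  have hE : ∀ P : Matrix m n 𝕜,
      LinearMap.range (toEuclideanLin P) = (LinearMap.ker (toEuclideanLin Pᴴ))ᗮ := fun P => by
    rw [toEuclideanLin_conjTranspose_eq_adjoint, LinearMap.orthogonal_ker,
      LinearMap.adjoint_adjoint]
  rw [← map_range_toLpLin 2 2, ← map_range_toLpLin 2 2, hE, hE, ker_toLpLin, ker_toLpLin, h]

end Range

section PosSemidef

variable {X n : Type*} [MeasurableSpace X] {μ : Measure X} [Fintype n] [DecidableEq n]
  {d : X → Matrix n n ℂ}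

theorem integral_mulVec_eq_zero_iff_of_posSemidef (hd : ∀ x, (d x).PosSemidef)
    (hd_int : ∀ i j, Integrable (fun x => d x i j) μ) (u : n → ℂ) :
    (of fun i j => ∫ x, d x i j ∂μ) *ᵥ u = 0 ↔ ∀ᵐ x ∂μ, d x *ᵥ u = 0 := by
  refine ⟨fun hu => ?_, integral_mulVec_eq_zero hd_int⟩
  have hquad : 0 + ∫ x, 1 * (star u ⬝ᵥ (d x *ᵥ u)) ∂μ = 0 := by
    simpa [hu] using (dotProduct_integral_mulVec hd_int (star u) u).symm
  filter_upwards [ae_eq_zero_of_add_integral_mul_eq_zero le_rfl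
    (fun x => (hd x).dotProduct_mulVec_nonneg u) (c := 1) (by simp)
    (Eventually.of_forall fun _ => by simp)
    (by simpa using integrable_dotProduct_mulVec hd_int (star u) u) hquad] with x hx
  exact ((hd x).dotProduct_mulVec_zero_iff u).1 hx

theorem ker_add_integral_mul_eq_inf {γ : Matrix n n ℂ} (hγ : γ.PosSemidef)
    (hd : ∀ x, (d x).PosSemidef) (hd_int : ∀ i j, Integrable (fun x => d x i j) μ)
    {φ : X → ℂ} (hφd_int : ∀ i j, Integrable (fun x => φ x * d x i j) μ) {c : ℂ}
    (hc : 0 ≤ c.re) (hcφ : ∀ᵐ x ∂μ, 0 < (c * φ x).re) :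
    LinearMap.ker (γ + of fun i j => ∫ x, φ x * d x i j ∂μ).mulVecLin =
      LinearMap.ker γ.mulVecLin ⊓ LinearMap.ker (of fun i j => ∫ x, d x i j ∂μ).mulVecLin := by
  ext u
  simp only [Submodule.mem_inf, LinearMap.mem_ker, mulVecLin_apply, add_mulVec,
    integral_mulVec_eq_zero_iff_of_posSemidef hd hd_int]
  have hφd_mulVec : (∀ᵐ x ∂μ, d x *ᵥ u = 0) → (of fun i j => ∫ x, φ x * d x i j ∂μ) *ᵥ u = 0 :=
    fun h => integral_mulVec_eq_zero (D := fun x => φ x • d x) hφd_int <|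
      h.mono fun x hx => by rw [smul_mulVec, hx, smul_zero]
  constructor
  · intro hu
    have hquad : star u ⬝ᵥ (γ *ᵥ u) + ∫ x, φ x * (star u ⬝ᵥ (d x *ᵥ u)) ∂μ = 0 := by
      have hφd := dotProduct_integral_mulVec (D := fun x => φ x • d x) hφd_int (star u) u
      simp only [smul_apply, smul_eq_mul, smul_mulVec, dotProduct_smul] at hφd
      rw [← hφd, ← dotProduct_add, hu, dotProduct_zero]
    have hd_u : ∀ᵐ x ∂μ, d x *ᵥ u = 0 := by
      filter_upwards [ae_eq_zero_of_add_integral_mul_eq_zero (hγ.dotProduct_mulVec_nonneg u)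
        (fun x => (hd x).dotProduct_mulVec_nonneg u) hc hcφ (by
          simpa [smul_mulVec, dotProduct_smul] using
            integrable_dotProduct_mulVec (D := fun x => φ x • d x) hφd_int (star u) u)
        hquad] with x hx
      exact ((hd x).dotProduct_mulVec_zero_iff u).1 hx
    rw [hφd_mulVec hd_u, add_zero] at hu
    exact ⟨hu, hd_u⟩
  · rintro ⟨hγu, hd_u⟩
    rw [hγu, hφd_mulVec hd_u, add_zero]

end PosSemidef

end Matrix

noncomputable def stieltjesKernel (α : ℝ) (z : ℂ) (t : ℝ) : ℂ :=
  ((1 + t - α : ℝ) : ℂ) / ((t : ℂ) - z)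

section StieltjesKernel

variable {α : ℝ} {z : ℂ}

theorem measurable_stieltjesKernel : Measurable (stieltjesKernel α z) := by
  unfold stieltjesKernel
  fun_prop

theorem exists_pos_le_norm_ofReal_sub (hz : ∀ t : ℝ, α ≤ t → z ≠ t) :
    ∃ δ > 0, ∀ t : ℝ, α ≤ t → δ ≤ ‖(t : ℂ) - z‖ := by
  set S : Set ℂ := (↑) '' Set.Ici α
  have hS : IsClosed S := isometry_ofReal.isClosedEmbedding.isClosedMap _ isClosed_Ici
  have hzS : z ∉ closure S := by
    rw [hS.closure_eq]
    rintro ⟨t, ht, rfl⟩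
    exact hz t ht rfl
  refine ⟨Metric.infDist z S,
    (Metric.infDist_pos_iff_notMem_closure (Set.nonempty_Ici.image _)).1 hzS, fun t ht => ?_⟩
  rw [norm_sub_rev, ← dist_eq]
  exact Metric.infDist_le_dist_of_mem ⟨t, ht, rfl⟩

theorem exists_norm_stieltjesKernel_le (hz : ∀ t : ℝ, α ≤ t → z ≠ t) :
    ∃ C, ∀ t : ℝ, α ≤ t → ‖stieltjesKernel α z t‖ ≤ C := by
  obtain ⟨δ, hδ, hδle⟩ := exists_pos_le_norm_ofReal_sub hz
  refine ⟨1 + ‖1 - α + z‖ / δ, fun t ht => ?_⟩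
  have hpos : 0 < ‖(t : ℂ) - z‖ := hδ.trans_le (hδle t ht)
  rw [stieltjesKernel, norm_div, div_le_iff₀ hpos]
  calc ‖((1 + t - α : ℝ) : ℂ)‖ = ‖((t : ℂ) - z) + (1 - α + z)‖ := by push_cast; ring_nf
    _ ≤ ‖(t : ℂ) - z‖ + ‖1 - α + z‖ := norm_add_le _ _
    _ ≤ (1 + ‖1 - α + z‖ / δ) * ‖(t : ℂ) - z‖ := by
      rw [add_mul, one_mul, div_mul_eq_mul_div, mul_div_assoc]
      gcongr
      exact le_mul_of_one_le_right (norm_nonneg _) ((one_le_div hδ).2 (hδle t ht))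

theorem exists_re_mul_stieltjesKernel_pos (hz : ∀ t : ℝ, α ≤ t → z ≠ t) :
    ∃ c : ℂ, 0 ≤ c.re ∧ ∀ t : ℝ, α ≤ t → 0 < (c * stieltjesKernel α z t).re := by
  rcases eq_or_ne z.im 0 with hreal | hnonreal
  · have hz_re : z = z.re := ext rfl (by simpa using hreal)
    have hlt : z.re < α := lt_of_not_ge fun h => hz z.re h hz_re
    refine ⟨1, by simp, fun t ht => ?_⟩
    rw [one_mul, stieltjesKernel, hz_re, ← ofReal_sub, ← ofReal_div, ofReal_re]
    exact div_pos (by linarith) (by linarith)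
  · refine ⟨-(z.im * I), by simp, fun t ht => ?_⟩
    have hne : (t : ℂ) - z ≠ 0 := sub_ne_zero.2 (hz t ht).symm
    have hr : 0 < 1 + t - α := by linarith
    have hN : 0 < normSq ((t : ℂ) - z) := normSq_pos.2 hne
    have hre : (-(z.im * I) * stieltjesKernel α z t).re =
        (1 + t - α) * z.im ^ 2 / normSq ((t : ℂ) - z) := by
      simp only [stieltjesKernel, neg_re, neg_im, mul_re, mul_im, I_re, I_im, ofReal_re,
        ofReal_im, div_re, div_im, sub_re, sub_im]
      ring
    rw [hre]
    positivity

theorem integrable_stieltjesKernel_mul {τ : Measure ℝ} (hτ : ∀ᵐ t ∂τ, α ≤ t)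
    (hz : ∀ t : ℝ, α ≤ t → z ≠ t) {g : ℝ → ℂ} (hg : Integrable g τ) :
    Integrable (fun t => stieltjesKernel α z t * g t) τ := by
  obtain ⟨C, hC⟩ := exists_norm_stieltjesKernel_le hz
  exact hg.bdd_mul measurable_stieltjesKernel.aestronglyMeasurable (hτ.mono hC)

end StieltjesKernel

theorem stmt14_general {q : ℕ} (α : ℝ) (γ : Matrix (Fin q) (Fin q) ℂ) (hγ : γ.PosSemidef)
    (τ : Measure ℝ) (hτ : τ (Set.Iio α) = 0)
    (d : ℝ → Matrix (Fin q) (Fin q) ℂ)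
    (hdpsd : ∀ t, (d t).PosSemidef)
    (hdint : ∀ j k, Integrable (fun t => d t j k) τ)
    (F : ℂ → Matrix (Fin q) (Fin q) ℂ)
    (hF : ∀ z : ℂ, (∀ t : ℝ, α ≤ t → z ≠ (t : ℂ)) →
      F z = γ + Matrix.of fun j k =>
        ∫ t, ((1 + t - α : ℝ) : ℂ) / ((t : ℂ) - z) * d t j k ∂τ) :
    (∀ z : ℂ, (∀ t : ℝ, α ≤ t → z ≠ (t : ℂ)) →
      (F z)ᴴ = F (starRingEnd ℂ z)
      ∧ LinearMap.ker (F z).mulVecLin =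
          LinearMap.ker γ.mulVecLin ⊓
            LinearMap.ker (Matrix.of fun j k => ∫ t, d t j k ∂τ :
              Matrix (Fin q) (Fin q) ℂ).mulVecLin)
    ∧ (∀ z w : ℂ, (∀ t : ℝ, α ≤ t → z ≠ (t : ℂ)) → (∀ t : ℝ, α ≤ t → w ≠ (t : ℂ)) →
        LinearMap.ker (F z).mulVecLin = LinearMap.ker (F w).mulVecLin
        ∧ LinearMap.range (F z).mulVecLin = LinearMap.range (F w).mulVecLin) := by
  have hτ_ae : ∀ᵐ t ∂τ, α ≤ t := ae_iff.2 <| by simp only [not_le]; exact hτ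
  have hconj : ∀ z : ℂ, (∀ t : ℝ, α ≤ t → z ≠ t) → ∀ t : ℝ, α ≤ t → starRingEnd ℂ z ≠ t :=
    fun z hz t ht h => hz t ht (by rw [← conj_conj z, h, conj_ofReal])
  have herm : ∀ z : ℂ, (∀ t : ℝ, α ≤ t → z ≠ t) → (F z)ᴴ = F (starRingEnd ℂ z) := by
    intro z hz
    rw [hF z hz, hF _ (hconj z hz), conjTranspose_add, hγ.1]
    congr 1
    ext j k
    refine integral_conj.symm.trans (integral_congr_ae (Eventually.of_forall fun t => ?_))
    have hd : starRingEnd ℂ (d t k j) = d t j k := (hdpsd t).1.apply j k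
    simp [map_div₀, hd]
  have hker : ∀ z : ℂ, (∀ t : ℝ, α ≤ t → z ≠ t) → LinearMap.ker (F z).mulVecLin =
      LinearMap.ker γ.mulVecLin ⊓ LinearMap.ker (of fun j k => ∫ t, d t j k ∂τ).mulVecLin := by
    intro z hz
    obtain ⟨c, hc, hcK⟩ := exists_re_mul_stieltjesKernel_pos hz
    rw [hF z hz]
    exact ker_add_integral_mul_eq_inf hγ hdpsd hdint
      (fun j k => integrable_stieltjesKernel_mul hτ_ae hz (hdint j k)) hc (hτ_ae.mono hcK)
  refine ⟨fun z hz => ⟨herm z hz, hker z hz⟩, fun z w hz hw => ⟨by rw [hker z hz, hker w hw], ?_⟩⟩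
  apply range_mulVecLin_eq_of_ker_conjTranspose_eq
  rw [herm z hz, herm w hw, hker _ (hconj z hz), hker _ (hconj w hw)]

theorem stmt14 {q : ℕ} (α : ℝ) (γ : Matrix (Fin q) (Fin q) ℂ) (hγ : γ.PosSemidef)
    (τ : Measure ℝ) [IsFiniteMeasure τ] (hτ : τ (Set.Iio α) = 0)
    (d : ℝ → Matrix (Fin q) (Fin q) ℂ)
    (hdmeas : ∀ j k : Fin q, Measurable fun t => d t j k)
    (hdpsd : ∀ t, (d t).PosSemidef)
    (hdint : ∀ j k, Integrable (fun t => d t j k) τ)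
    (F : ℂ → Matrix (Fin q) (Fin q) ℂ)
    (hF : ∀ z : ℂ, (∀ t : ℝ, α ≤ t → z ≠ (t : ℂ)) →
      F z = γ + Matrix.of fun j k =>
        ∫ t, ((1 + t - α : ℝ) : ℂ) / ((t : ℂ) - z) * d t j k ∂τ) :
    (∀ z : ℂ, (∀ t : ℝ, α ≤ t → z ≠ (t : ℂ)) →
      (F z)ᴴ = F (starRingEnd ℂ z)
      ∧ LinearMap.ker (F z).mulVecLin =
          LinearMap.ker γ.mulVecLin ⊓
            LinearMap.ker (Matrix.of fun j k => ∫ t, d t j k ∂τ :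
              Matrix (Fin q) (Fin q) ℂ).mulVecLin)
    ∧ (∀ z w : ℂ, (∀ t : ℝ, α ≤ t → z ≠ (t : ℂ)) → (∀ t : ℝ, α ≤ t → w ≠ (t : ℂ)) →
        LinearMap.ker (F z).mulVecLin = LinearMap.ker (F w).mulVecLin
        ∧ LinearMap.range (F z).mulVecLin = LinearMap.range (F w).mulVecLin) :=
  stmt14_general α γ hγ τ hτ d hdpsd hdint F hF
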